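/- arXiv:quant-ph/0407023 — 5 statements merged into one kernel-verified Lean document; each statement's English description precedes it below -/
import Mathlib

section
/- Let X be a Hilbert space and let {A_n} be a sequence of bounded self-adjoint operators on X. If there exists a bounded self-adjoint operator B such that A_n ≤ A_{n+1} ≤ B for all n (in the Loewner order), then there exists a bounded self-adjoint operator A such that A_n converges strongly to A as n → ∞ and A ≤ B. -/
/-!
For each `x` the real sequence `re ⟪A n x, x⟫` is increasing and bounded by `re ⟪B x, x⟫`, hence
convergent. A positive `T` in a C⋆-algebra satisfies `T * T ≤ ‖T‖ • T`, i.e.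
`‖T x‖² ≤ ‖T‖ re ⟪T x, x⟫`. For `T = A n - A N` with `N ≤ n` we have `0 ≤ T ≤ B - A 0`, so
`‖T‖ ≤ ‖B - A 0‖` and `‖A n x - A N x‖² ≤ ‖B - A 0‖ (re ⟪A n x, x⟫ - re ⟪A N x, x⟫)`: the sequence
`A n x` is Cauchy. Its pointwise limit is a bounded operator by Banach–Steinhaus, and the
positivity of `B - A n` passes to the limit.
-/

open Filter Topology

namespace CStarAlgebra

variable {A : Type*} [NonUnitalCStarAlgebra A] [PartialOrder A] [StarOrderedRing A]

lemma mul_self_le_norm_smul_self {a : A} (ha : 0 ≤ a) : a * a ≤ ‖a‖ • a := by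
  obtain ⟨s, hs, rfl⟩ : ∃ s, 0 ≤ s ∧ s * s = a :=
    ⟨CFC.sqrt a, CFC.sqrt_nonneg a, CFC.sqrt_mul_sqrt_self a⟩
  simpa only [hs.star_eq, mul_assoc] using star_left_conjugate_le_norm_smul (a := s) (b := s * s)

end CStarAlgebra

namespace ContinuousLinearMap

open scoped InnerProductSpace
open RCLike

section RCLike

variable {𝕜 E : Type*} [RCLike 𝕜] [NormedAddCommGroup E] [InnerProductSpace 𝕜 E]

theorem IsPositive.of_tendsto {ι : Type*} {l : Filter ι} [l.NeBot] {T : ι → E →L[𝕜] E}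
    {S : E →L[𝕜] E} (hT : ∀ i, (T i).IsPositive)
    (h : ∀ x, Tendsto (fun i ↦ T i x) l (𝓝 (S x))) : S.IsPositive := by
  refine ⟨fun x y ↦ ?_, fun x ↦ ?_⟩
  · change ⟪S x, y⟫_𝕜 = ⟪x, S y⟫_𝕜
    refine tendsto_nhds_unique ((h x).inner tendsto_const_nhds) ?_
    simpa only [(hT _).inner_left_eq_inner_right] using tendsto_const_nhds.inner (h y)
  · exact ge_of_tendsto ((continuous_re.tendsto _).comp ((h x).inner tendsto_const_nhds))
      (Eventually.of_forall fun i ↦ (hT i).re_inner_nonneg_left x)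

theorem re_inner_apply_le_of_le {S T : E →L[𝕜] E} (h : S ≤ T) (x : E) :
    re ⟪S x, x⟫_𝕜 ≤ re ⟪T x, x⟫_𝕜 := by
  simpa [inner_sub_left] using h.re_inner_nonneg_left x

end RCLike

variable {H : Type*} [NormedAddCommGroup H] [InnerProductSpace ℂ H] [CompleteSpace H]

theorem IsPositive.norm_apply_sq_le {T : H →L[ℂ] H} (hT : T.IsPositive) (x : H) :
    ‖T x‖ ^ 2 ≤ ‖T‖ * re ⟪T x, x⟫_ℂ := by
  have h := re_inner_apply_le_of_le
    (CStarAlgebra.mul_self_le_norm_smul_self ((nonneg_iff_isPositive T).2 hT)) x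
  rwa [mul_def, comp_apply, hT.inner_left_eq_inner_right, inner_self_eq_norm_sq, smul_apply,
    real_smul_eq_coe_smul (K := ℂ), inner_smul_real_left, smul_re] at h

theorem cauchySeq_apply_of_monotone_of_le {A : ℕ → H →L[ℂ] H} {B : H →L[ℂ] H}
    (hA : Monotone A) (hAB : ∀ n, A n ≤ B) (x : H) : CauchySeq fun n ↦ A n x := by
  set a : ℕ → ℝ := fun n ↦ re ⟪A n x, x⟫_ℂ
  have ha : Monotone a := fun m n h ↦ re_inner_apply_le_of_le (hA h) x
  obtain ⟨ℓ, hℓ⟩ : ∃ ℓ, Tendsto a atTop (𝓝 ℓ) := ⟨_, tendsto_atTop_ciSup ha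
    ⟨_, Set.forall_mem_range.2 fun n ↦ re_inner_apply_le_of_le (hAB n) x⟩⟩
  set C := ‖B - A 0‖
  have hdist : ∀ N n, N ≤ n → dist (A n x) (A N x) ≤ √(C * (ℓ - a N)) := by
    intro N n hNn
    have hpos : (A n - A N).IsPositive := hA hNn
    have hnorm : ‖A n - A N‖ ≤ C := CStarAlgebra.norm_le_norm_of_nonneg_of_le
      (sub_nonneg.2 (hA hNn)) (sub_le_sub (hAB n) (hA N.zero_le))
    have hgap : re ⟪(A n - A N) x, x⟫_ℂ ≤ ℓ - a N := by
      simpa [a, inner_sub_left] using ha.ge_of_tendsto hℓ n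
    have haN : a N ≤ ℓ := ha.ge_of_tendsto hℓ N
    rw [dist_eq_norm, ← sub_apply, Real.le_sqrt (norm_nonneg _) (by positivity)]
    calc ‖(A n - A N) x‖ ^ 2 ≤ ‖A n - A N‖ * re ⟪(A n - A N) x, x⟫_ℂ := hpos.norm_apply_sq_le x
      _ ≤ C * (ℓ - a N) := mul_le_mul hnorm hgap (hpos.re_inner_nonneg_left x) (norm_nonneg _)
  have hlim : Tendsto (fun N ↦ √(C * (ℓ - a N))) atTop (𝓝 0) := by
    simpa using (((tendsto_const_nhds (x := ℓ)).sub hℓ).const_mul C).sqrt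
  refine Metric.cauchySeq_iff'.2 fun ε hε ↦ ?_
  obtain ⟨N, hN⟩ := (hlim.eventually (gt_mem_nhds hε)).exists
  exact ⟨N, fun n hn ↦ (hdist N n hn).trans_lt hN⟩

end ContinuousLinearMap

theorem monotone_bounded_operator_sequence_strong_limit_general
    (X : Type*) [NormedAddCommGroup X] [InnerProductSpace ℂ X] [CompleteSpace X]
    (A : ℕ → X →L[ℂ] X) (B : X →L[ℂ] X)
    (hB : IsSelfAdjoint B)
    (hmono : ∀ n, (A (n + 1) - A n).IsPositive)
    (hbound : ∀ n, (B - A n).IsPositive) :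
    ∃ L : X →L[ℂ] X, IsSelfAdjoint L ∧ (B - L).IsPositive ∧
      ∀ x : X, Tendsto (fun n => A n x) atTop (𝓝 (L x)) := by
  have hA : Monotone A := monotone_nat_of_le_succ hmono
  choose f hf using fun x ↦ cauchySeq_tendsto_of_complete
    (ContinuousLinearMap.cauchySeq_apply_of_monotone_of_le hA hbound x)
  let L := continuousLinearMapOfTendsto A (tendsto_pi_nhds.2 hf)
  have hBL : (B - L).IsPositive :=
    ContinuousLinearMap.IsPositive.of_tendsto hbound fun x ↦ tendsto_const_nhds.sub (hf x)
  exact ⟨L, by simpa using hB.sub hBL.isSelfAdjoint, hBL, hf⟩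

/-- A monotone sequence of bounded self-adjoint operators on a Hilbert
space that is bounded above by a self-adjoint operator `B` (in the Loewner order)
converges strongly to a bounded self-adjoint operator `A` with `A ≤ B`. -/
theorem monotone_bounded_operator_sequence_strong_limit
    (X : Type*) [NormedAddCommGroup X] [InnerProductSpace ℂ X] [CompleteSpace X]
    (A : ℕ → X →L[ℂ] X) (B : X →L[ℂ] X)
    (hA : ∀ n, IsSelfAdjoint (A n)) (hB : IsSelfAdjoint B)
    (hmono : ∀ n, (A (n + 1) - A n).IsPositive)
    (hbound : ∀ n, (B - A n).IsPositive) :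
    ∃ L : X →L[ℂ] X, IsSelfAdjoint L ∧ (B - L).IsPositive ∧
      ∀ x : X, Tendsto (fun n => A n x) atTop (𝓝 (L x)) :=
  monotone_bounded_operator_sequence_strong_limit_general X A B hB hmono hbound
end

section
/- Let T be a bounded self-adjoint operator on a Hilbert space X and let {e_i} be an orthonormal basis. Then T is positive if and only if for every finite sequence ν_1 < ... < ν_m of positive integers, the determinant of the m×m matrix with (j,k) entry ⟨T e_{ν_j}, e_{ν_k}⟩ is nonnegative. -/
/-!
Positivity of `T` is equivalent to positive semidefiniteness of all its finite compressions
`(⟪e j, T (e k)⟫)`: the quadratic form of `T` is continuous and the partial sums of the basis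
expansion of `x` converge to `x`. A Hermitian matrix `A` whose principal minors are nonnegative is
positive semidefinite, because expanding `det (A + t • 1) = ∑ₛ det A_s * t ^ |sᶜ|` shows that this
determinant is positive for `t > 0`, so no `-t < 0` is an eigenvalue of `A`.
-/

open ComplexOrder

namespace Matrix

variable {n R : Type*} [Fintype n] [DecidableEq n]

theorem det_add_smul_one [CommRing R] (A : Matrix n n R) (t : R) :
    (A + t • 1).det = ∑ s : Finset n, (A.submatrix ((↑) : s → n) (↑)).det * t ^ sᶜ.card := by
  have hscale (s : Finset n) : of (s.piecewise A.row (t • 1 : Matrix n n R).row) =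
      diagonal (fun i => if i ∈ s then 1 else t) *
        of (s.piecewise A.row (1 : Matrix n n R).row) := by
    ext i j
    by_cases hi : i ∈ s <;> simp [hi, Finset.piecewise, diagonal_mul, row]
  calc (A + t • 1).det
      = ∑ s : Finset n, (of (s.piecewise A.row (t • 1 : Matrix n n R).row)).det :=
        detRowAlternating.map_add_univ A.row (t • 1 : Matrix n n R).row
    _ = _ := by
        refine Finset.sum_congr rfl fun s _ => ?_
        rw [hscale, det_mul, det_diagonal, det_piecewise_one_eq_submatrix_det, mul_comm]
        simp [Finset.prod_ite, Finset.filter_not, Finset.compl_eq_univ_sdiff]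

variable {𝕜 : Type*} [RCLike 𝕜] {A : Matrix n n 𝕜}

theorem IsHermitian.posSemidef_of_det_submatrix_nonneg (hA : A.IsHermitian)
    (h : ∀ s : Finset n, 0 ≤ (A.submatrix ((↑) : s → n) (↑)).det) : A.PosSemidef := by
  refine hA.posSemidef_iff_eigenvalues_nonneg.mpr fun i => ?_
  by_contra! hneg
  set t : 𝕜 := -(hA.eigenvalues i : 𝕜) with ht
  have ht_pos : 0 < t := by simpa [ht] using hneg
  have hsingular : (A + t • 1).det = 0 := by
    refine exists_mulVec_eq_zero_iff.mp ⟨⇑(hA.eigenvectorBasis i),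
      by simpa using hA.eigenvectorBasis.orthonormal.ne_zero i, ?_⟩
    rw [add_mulVec, hA.mulVec_eigenvectorBasis, smul_mulVec, one_mulVec,
      RCLike.real_smul_eq_coe_smul (K := 𝕜), ← add_smul, ht, add_neg_cancel, zero_smul]
  have hpos : 0 < (A + t • 1).det := by
    rw [det_add_smul_one]
    refine Finset.sum_pos' (fun s _ => mul_nonneg (h s) (pow_nonneg ht_pos.le _))
      ⟨∅, Finset.mem_univ _, ?_⟩
    simpa using pow_pos ht_pos _
  exact hpos.ne' hsingular

theorem IsHermitian.posSemidef_of_det_submatrix_strictMono_nonneg [LinearOrder n]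
    (hA : A.IsHermitian)
    (h : ∀ (m : ℕ) (ν : Fin m → n), StrictMono ν → 0 ≤ (A.submatrix ν ν).det) :
    A.PosSemidef := by
  refine hA.posSemidef_of_det_submatrix_nonneg fun s => ?_
  rw [← det_submatrix_equiv_self (s.orderIsoOfFin rfl).toEquiv, submatrix_submatrix]
  exact h _ _ (s.orderEmbOfFin rfl).strictMono

end Matrix

open Matrix
open scoped InnerProductSpace

namespace LinearMap

variable {𝕜 E ι : Type*} [RCLike 𝕜] [NormedAddCommGroup E] [InnerProductSpace 𝕜 E]

def compressionMatrix (T : E →ₗ[𝕜] E) (v : ι → E) : Matrix ι ι 𝕜 :=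
  of fun j k => ⟪v j, T (v k)⟫_𝕜

variable {T : E →ₗ[𝕜] E}

theorem star_dotProduct_compressionMatrix_mulVec [Fintype ι] (v : ι → E) (c : ι → 𝕜) :
    star c ⬝ᵥ (T.compressionMatrix v *ᵥ c) = ⟪∑ j, c j • v j, T (∑ j, c j • v j)⟫_𝕜 := by
  simp only [compressionMatrix, map_sum, map_smul, inner_sum, sum_inner, inner_smul_left,
    inner_smul_right, dotProduct, mulVec, of_apply, Pi.star_apply, RCLike.star_def, Finset.mul_sum]
  rw [Finset.sum_comm]
  exact Finset.sum_congr rfl fun j _ => Finset.sum_congr rfl fun k _ => by ring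

theorem IsSymmetric.isHermitian_compressionMatrix (hT : T.IsSymmetric) (v : ι → E) :
    (T.compressionMatrix v).IsHermitian :=
  Matrix.ext fun j k => by
    simp only [compressionMatrix, conjTranspose_apply, of_apply, RCLike.star_def, inner_conj_symm]
    exact hT _ _

theorem IsPositive.posSemidef_compressionMatrix [Fintype ι] (hT : T.IsPositive) (v : ι → E) :
    (T.compressionMatrix v).PosSemidef :=
  .of_dotProduct_mulVec_nonneg (hT.isSymmetric.isHermitian_compressionMatrix v) fun c => by
    rw [star_dotProduct_compressionMatrix_mulVec]
    exact hT.inner_nonneg_right _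

end LinearMap

namespace ContinuousLinearMap

variable {𝕜 E ι : Type*} [RCLike 𝕜] [NormedAddCommGroup E] [InnerProductSpace 𝕜 E]

theorem isPositive_of_posSemidef_compressionMatrix {T : E →L[𝕜] E} (hT : T.IsSymmetric)
    (b : HilbertBasis ι 𝕜 E)
    (h : ∀ s : Finset ι, ((T : E →ₗ[𝕜] E).compressionMatrix fun i : s => b i).PosSemidef) :
    T.IsPositive := by
  refine ⟨hT, fun x => ?_⟩
  set partialSum : Finset ι → E := fun s => ∑ i ∈ s, b.repr x i • b i
  have hpartial : ∀ s, 0 ≤ T.reApplyInnerSelf (partialSum s) := fun s => by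
    have := (h s).re_dotProduct_nonneg fun i => b.repr x i
    rwa [LinearMap.star_dotProduct_compressionMatrix_mulVec, ← inner_re_symm,
      Finset.sum_coe_sort s fun i => b.repr x i • b i] at this
  have hlim : Filter.Tendsto (fun s => T.reApplyInnerSelf (partialSum s)) Filter.atTop
      (nhds (T.reApplyInnerSelf x)) :=
    (T.reApplyInnerSelf_continuous.tendsto x).comp (b.hasSum_repr x)
  exact ge_of_tendsto' hlim hpartial

end ContinuousLinearMap

/-- A bounded self-adjoint operator `T` on a separable Hilbert space with
orthonormal basis `{e_i}` is positive iff every principal minor, i.e. the determinant of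
the matrix `(⟨e (ν j), T (e (ν k))⟩)` for any strictly increasing finite sequence `ν`,
is nonnegative. -/
theorem isPositive_iff_principal_minors_nonneg
    (X : Type*) [NormedAddCommGroup X] [InnerProductSpace ℂ X] [CompleteSpace X]
    (e : HilbertBasis ℕ ℂ X) (T : X →L[ℂ] X) (hT : IsSelfAdjoint T) :
    T.IsPositive ↔
      ∀ (m : ℕ) (ν : Fin m → ℕ), StrictMono ν →
        0 ≤ (Matrix.of fun j k : Fin m => (inner ℂ (e (ν j)) (T (e (ν k))) : ℂ)).det := by
  have hsymm : T.IsSymmetric := hT.isSymmetric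
  refine ⟨fun hpos m ν _ => (hpos.toLinearMap.posSemidef_compressionMatrix (e ∘ ν)).det_nonneg,
    fun h => T.isPositive_of_posSemidef_compressionMatrix hsymm e fun s => ?_⟩
  exact (hsymm.isHermitian_compressionMatrix _).posSemidef_of_det_submatrix_strictMono_nonneg
    fun m ν hν => h m _ ((Subtype.strictMono_coe _).comp hν)
end

section
/- Let A be the 2×2 Hermitian matrix with entries A₁₁ = 2/3, A₁₂ = A₂₁ = √2/3, A₂₂ = 1/3. Then A is positive semi-definite with rank 1, and there does not exist a nonzero 2×2 Hermitian matrix B all of whose entries have rational real and imaginary parts such that 0 ≤ B ≤ A in the Loewner order. -/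
/-!
`A = a aᴴ` with `a = (√2, 1) / √3`, so `A` annihilates `u = (1, -√2)`. From `0 ≤ B ≤ A` we get
`0 ≤ uᴴ B u ≤ uᴴ A u = 0`, hence `B u = 0`, i.e. `B i 0 = √2 * B i 1` in every row. Since `√2` is
irrational, this is impossible for Gaussian-rational entries unless the row vanishes.
-/

open ComplexOrder

def GaussianRational (z : ℂ) : Prop := ∃ q r : ℚ, z = (q : ℂ) + (r : ℂ) * Complex.I

open Matrix

theorem Matrix.rank_eq_zero_iff {m n K : Type*} [Fintype n] [Field K] {A : Matrix m n K} :
    A.rank = 0 ↔ A = 0 := by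
  classical
  rw [rank, Submodule.finrank_eq_zero, LinearMap.range_eq_bot, ← toLin'_apply',
    LinearEquiv.map_eq_zero_iff]

theorem Matrix.rank_vecMulVec_eq_one {m n K : Type*} [Fintype n] [Field K] {w : m → K}
    {v : n → K} (hw : w ≠ 0) (hv : v ≠ 0) : (vecMulVec w v).rank = 1 := by
  have hle := rank_vecMulVec_le w v
  have hne : (vecMulVec w v).rank ≠ 0 := by
    rw [Ne, rank_eq_zero_iff]
    intro h
    obtain ⟨i, hi⟩ := Function.ne_iff.mp hw
    obtain ⟨j, hj⟩ := Function.ne_iff.mp hv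
    exact mul_ne_zero hi hj (congrFun (congrFun h i) j)
  omega

theorem Matrix.mulVec_eq_zero_of_posSemidef_of_posSemidef_sub {n 𝕜 : Type*} [Fintype n]
    [RCLike 𝕜] {A B : Matrix n n 𝕜} (hB : B.PosSemidef) (hAB : (A - B).PosSemidef)
    {x : n → 𝕜} (hx : A *ᵥ x = 0) : B *ᵥ x = 0 := by
  refine (hB.dotProduct_mulVec_zero_iff x).mp (le_antisymm ?_ (hB.dotProduct_mulVec_nonneg x))
  simpa [sub_mulVec, hx] using hAB.dotProduct_mulVec_nonneg x

theorem Irrational.eq_zero_of_ratCast_eq_mul_ratCast {x : ℝ} (hx : Irrational x) {p q : ℚ}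
    (h : (p : ℝ) = x * q) : q = 0 := by
  by_contra hq
  exact (hx.mul_ratCast hq).ne_rat p h.symm

theorem GaussianRational.eq_zero_of_eq_ofReal_mul {x : ℝ} (hx : Irrational x) {z w : ℂ}
    (hz : GaussianRational z) (hw : GaussianRational w) (h : w = x * z) : z = 0 := by
  obtain ⟨a, b, rfl⟩ := hz
  obtain ⟨c, d, rfl⟩ := hw
  have hre : (c : ℝ) = x * a := by simpa using congrArg Complex.re h
  have him : (d : ℝ) = x * b := by simpa using congrArg Complex.im h
  rw [hx.eq_zero_of_ratCast_eq_mul_ratCast hre, hx.eq_zero_of_ratCast_eq_mul_ratCast him]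
  simp

noncomputable def rankOneFactor : Fin 2 → ℂ := ![((√2 / √3 : ℝ) : ℂ), ((1 / √3 : ℝ) : ℂ)]

theorem vecMulVec_rankOneFactor_star :
    vecMulVec rankOneFactor (star rankOneFactor) =
      Matrix.of ![![((2 / 3 : ℝ) : ℂ), ((√2 / 3 : ℝ) : ℂ)],
                  ![((√2 / 3 : ℝ) : ℂ), ((1 / 3 : ℝ) : ℂ)]] := by
  have h2 : ((√2 : ℝ) : ℂ) ^ 2 = 2 := by norm_cast; simp
  have h3 : ((√3 : ℝ) : ℂ) ^ 2 = 3 := by norm_cast; simp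
  ext i j
  fin_cases i <;> fin_cases j <;> simp [rankOneFactor, vecMulVec_apply] <;> field_simp <;>
    simp [h2, h3, mul_comm]

theorem star_rankOneFactor_dotProduct : star rankOneFactor ⬝ᵥ ![1, -(√2 : ℂ)] = 0 := by
  simp only [rankOneFactor, dotProduct, Fin.sum_univ_two]
  simp
  ring

/-- The matrix `A = [[2/3, √2/3], [√2/3, 1/3]]` is positive semi-definite
of rank one, and no nonzero Hermitian matrix `B` with Gaussian-rational entries satisfies
`0 ≤ B ≤ A` in the Loewner order. -/
theorem no_rational_matrix_below_rank_one_example :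
    ∀ A : Matrix (Fin 2) (Fin 2) ℂ,
      A = Matrix.of ![![((2 / 3 : ℝ) : ℂ), ((Real.sqrt 2 / 3 : ℝ) : ℂ)],
                      ![((Real.sqrt 2 / 3 : ℝ) : ℂ), ((1 / 3 : ℝ) : ℂ)]] →
      A.PosSemidef ∧ A.rank = 1 ∧
        ¬∃ B : Matrix (Fin 2) (Fin 2) ℂ, B ≠ 0 ∧ B.IsHermitian ∧
          (∀ i j, GaussianRational (B i j)) ∧ B.PosSemidef ∧ (A - B).PosSemidef := by
  rintro A rfl
  rw [← vecMulVec_rankOneFactor_star]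
  set a := rankOneFactor
  have ha : a ≠ 0 := by simp [a, rankOneFactor, funext_iff, Fin.forall_fin_two]
  refine ⟨posSemidef_vecMulVec_self_star a, rank_vecMulVec_eq_one ha (star_ne_zero.mpr ha), ?_⟩
  rintro ⟨B, hB0, -, hBrat, hB, hAB⟩
  have hAu : vecMulVec a (star a) *ᵥ ![1, -(√2 : ℂ)] = 0 := by
    rw [vecMulVec_mulVec, star_rankOneFactor_dotProduct, MulOpposite.op_zero, zero_smul]
  have hBu := mulVec_eq_zero_of_posSemidef_of_posSemidef_sub hB hAB hAu
  refine hB0 (Matrix.ext fun i j => ?_)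
  have hrow : B i 0 = (√2 : ℝ) * B i 1 := by
    have := congrFun hBu i
    simp only [mulVec, dotProduct, Fin.sum_univ_two, cons_val_zero, cons_val_one, mul_one,
      mul_neg, Pi.zero_apply] at this
    linear_combination this
  have hi1 := (hBrat i 1).eq_zero_of_eq_ofReal_mul irrational_sqrt_two (hBrat i 0) hrow
  fin_cases j <;> simp [hrow, hi1]
end

section
/- Let S and T be bounded self-adjoint operators on a Hilbert space X with aI ≤ S for some real a > 0 and S ≤ T. Then log S and log T (defined by continuous functional calculus) are bounded self-adjoint operators and log S ≤ log T. -/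
theorem log_operator_monotone_general
    (X : Type*) [NormedAddCommGroup X] [InnerProductSpace ℂ X] [CompleteSpace X]
    (S T : X →L[ℂ] X)
    (a : ℝ) (ha : 0 < a)
    (haS : (S - a • (1 : X →L[ℂ] X)).IsPositive)
    (hST : (T - S).IsPositive) :
    IsSelfAdjoint (cfc Real.log S) ∧ IsSelfAdjoint (cfc Real.log T) ∧
      (cfc Real.log T - cfc Real.log S).IsPositive := by
  refine ⟨cfc_predicate Real.log S, cfc_predicate Real.log T, ?_⟩
  rw [← ContinuousLinearMap.le_def] at haS hST ⊢
  have hS_pos : IsStrictlyPositive S := (isStrictlyPositive_one.smul ha).of_le haS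
  exact CFC.log_le_log hST hS_pos

/-- If `a•I ≤ S ≤ T` with `a > 0`, then `log S` and `log T` (via
continuous functional calculus) are bounded self-adjoint operators and `log S ≤ log T`
(operator monotonicity of the logarithm). -/
theorem log_operator_monotone
    (X : Type*) [NormedAddCommGroup X] [InnerProductSpace ℂ X] [CompleteSpace X]
    (S T : X →L[ℂ] X) (hS : IsSelfAdjoint S) (hT : IsSelfAdjoint T)
    (a : ℝ) (ha : 0 < a)
    (haS : (S - a • (1 : X →L[ℂ] X)).IsPositive)
    (hST : (T - S).IsPositive) :
    IsSelfAdjoint (cfc Real.log S) ∧ IsSelfAdjoint (cfc Real.log T) ∧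
      (cfc Real.log T - cfc Real.log S).IsPositive :=
  log_operator_monotone_general X S T a ha haS hST
end

section
/- Let M be a positive bounded self-adjoint operator on a Hilbert space X with aI ≤ M for some a > 0, and let x ∈ X with ‖x‖ = 1. Then ⟨(log M)x, x⟩ ≤ log⟨Mx, x⟩. -/
/-! The tangent line of the concave logarithm at `s > 0` gives `log t ≤ log s - 1 + t / s` for
every `t > 0`. Since `a • 1 ≤ M` with `a > 0`, the spectrum of `M` is positive, so the continuous
functional calculus turns this into the operator inequality `log M ≤ (log s - 1) • 1 + s⁻¹ • M`.
Taking the quadratic form at the unit vector `x` with `s = ⟨M x, x⟩`, the right side becomes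
`log s`. -/

open Real

theorem Real.log_le_log_sub_one_add_inv_mul {s t : ℝ} (hs : 0 < s) (ht : 0 < t) :
    log t ≤ log s - 1 + s⁻¹ * t := by
  have := log_le_sub_one_of_pos (div_pos ht hs)
  rw [log_div ht.ne' hs.ne', div_eq_inv_mul] at this
  linarith

theorem cfc_log_le_algebraMap_add_smul {A : Type*} [CStarAlgebra A] [PartialOrder A]
    [StarOrderedRing A] {a : A} (ha : IsStrictlyPositive a) {s : ℝ} (hs : 0 < s) :
    cfc log a ≤ algebraMap ℝ A (log s - 1) + s⁻¹ • a :=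
  calc cfc log a ≤ cfc (fun t ↦ (log s - 1) + s⁻¹ * t) a :=
        cfc_mono (fun t ht ↦ log_le_log_sub_one_add_inv_mul hs (ha.spectrum_pos ht))
          (continuousOn_log.mono fun t ht ↦ (ha.spectrum_pos ht).ne')
    _ = algebraMap ℝ A (log s - 1) + s⁻¹ • a := by
        rw [cfc_const_add _ _ _ (by fun_prop), cfc_const_mul_id _ _]

namespace ContinuousLinearMap

variable {𝕜 E : Type*} [RCLike 𝕜] [NormedAddCommGroup E] [InnerProductSpace 𝕜 E]

theorem reApplyInnerSelf_le_reApplyInnerSelf {S T : E →L[𝕜] E} (h : S ≤ T) (x : E) :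
    S.reApplyInnerSelf x ≤ T.reApplyInnerSelf x := by
  have := ((le_def S T).mp h).2 x
  simpa [reApplyInnerSelf_apply, inner_sub_left] using this

theorem reApplyInnerSelf_add (S T : E →L[𝕜] E) (x : E) :
    (S + T).reApplyInnerSelf x = S.reApplyInnerSelf x + T.reApplyInnerSelf x := by
  simp [reApplyInnerSelf_apply, inner_add_left]

variable [NormedSpace ℝ E] [IsScalarTower ℝ 𝕜 E]

theorem reApplyInnerSelf_real_smul (r : ℝ) (T : E →L[𝕜] E) (x : E) :
    (r • T).reApplyInnerSelf x = r * T.reApplyInnerSelf x := by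
  rw [reApplyInnerSelf_apply, reApplyInnerSelf_apply, smul_apply, ← algebraMap_smul 𝕜 r (T x),
    RCLike.algebraMap_eq_ofReal, inner_smul_real_left, RCLike.smul_re]

theorem reApplyInnerSelf_algebraMap (r : ℝ) (x : E) :
    (algebraMap ℝ (E →L[𝕜] E) r).reApplyInnerSelf x = r * ‖x‖ ^ 2 := by
  rw [Algebra.algebraMap_eq_smul_one, reApplyInnerSelf_real_smul, reApplyInnerSelf_apply,
    one_apply_eq_self, inner_self_eq_norm_sq]

end ContinuousLinearMap

open ContinuousLinearMap in
theorem inner_log_le_log_inner_general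
    (X : Type*) [NormedAddCommGroup X] [InnerProductSpace ℂ X] [CompleteSpace X]
    (M : X →L[ℂ] X)
    (a : ℝ) (ha : 0 < a) (haM : (M - a • (1 : X →L[ℂ] X)).IsPositive)
    (x : X) (hx : ‖x‖ = 1) :
    (cfc Real.log M).reApplyInnerSelf x ≤ Real.log (M.reApplyInnerSelf x) := by
  have hle : algebraMap ℝ (X →L[ℂ] X) a ≤ M := by
    rwa [Algebra.algebraMap_eq_smul_one, le_def]
  have hM : IsStrictlyPositive M := (isStrictlyPositive_algebraMap ha).of_le hle
  set s := M.reApplyInnerSelf x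
  have hs : 0 < s := by
    have := reApplyInnerSelf_le_reApplyInnerSelf hle x
    rw [reApplyInnerSelf_algebraMap, hx, one_pow, mul_one] at this
    exact ha.trans_le this
  calc (cfc Real.log M).reApplyInnerSelf x
      ≤ (algebraMap ℝ (X →L[ℂ] X) (Real.log s - 1) + s⁻¹ • M).reApplyInnerSelf x :=
        reApplyInnerSelf_le_reApplyInnerSelf (cfc_log_le_algebraMap_add_smul hM hs) x
    _ = Real.log s := by
        rw [reApplyInnerSelf_add, reApplyInnerSelf_algebraMap, reApplyInnerSelf_real_smul, hx,
          inv_mul_cancel₀ hs.ne']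
        ring

/-- Operator Jensen inequality for the logarithm: if `a•I ≤ M` for some
`a > 0` and `‖x‖ = 1`, then `⟨(log M) x, x⟩ ≤ log ⟨M x, x⟩`. -/
theorem inner_log_le_log_inner
    (X : Type*) [NormedAddCommGroup X] [InnerProductSpace ℂ X] [CompleteSpace X]
    (M : X →L[ℂ] X) (hM : IsSelfAdjoint M)
    (a : ℝ) (ha : 0 < a) (haM : (M - a • (1 : X →L[ℂ] X)).IsPositive)
    (x : X) (hx : ‖x‖ = 1) :
    (cfc Real.log M).reApplyInnerSelf x ≤ Real.log (M.reApplyInnerSelf x) :=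
  inner_log_le_log_inner_general X M a ha haM x hx
end
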